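/- Let $G$ be a finite group of order $pm$ with $p$ prime and $\gcd(p,m)=1$, acting on a finite-dimensional module $V$ over an algebraically closed field of characteristic $p$. Let $V_0 = \{v \in V : f(v) = 0 \text{ for all } f \in (V^*)^G\}$. Then $\delta(G,V) = 0$ if $V^G = \{0\}$; $\delta(G,V) = 1$ if $V^G \neq \{0\}$ and $V^G \cap V_0 = \{0\}$; and $\delta(G,V) = p$ otherwise. -/

import Mathlib

/-!
If some invariant linear form does not vanish at a nonzero fixed point `v`, then `ε(G,v) = 1`.
Otherwise `v ∈ V₀`, and a homogeneous invariant `f` of degree `d` with `p ∤ d` vanishes at `v`: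
the linear part `L` of `x ↦ f(x + v)` is an invariant linear form because `v` is fixed, so
`L(v) = 0`, while `L(v)` is the coefficient of `t` in `f((1 + t)v) = (1 + t)^d f(v)`, i.e.
`d f(v)`. Degree `p` is attained: for a subgroup `P` of order `p` and a coordinate with
`vᵢ ≠ 0`, the transfer from `P` to `G` of the `P`-norm of `xᵢ` is an invariant of degree `p`
taking the value `m vᵢ^p ≠ 0` at `v`. So `ε(G,v) ∈ {1, p}` on `V^G \ {0}`, and `δ(G,V)` is
read off.
-/

open MvPolynomial

/-- The action of a matrix `A` on polynomials, substituting each variable `X i`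
by the linear form `∑ j, A i j • X j`, so that `(matAct A f)(v) = f(A ⬝ v)`. -/
noncomputable def matAct {F : Type*} [Field F] {N : ℕ} (A : Matrix (Fin N) (Fin N) F) :
    MvPolynomial (Fin N) F →ₐ[F] MvPolynomial (Fin N) F :=
  aeval fun i => ∑ j, C (A i j) * X j

/-- `f` is an invariant of the representation `ρ`: `σ(f) = f ∘ σ⁻¹ = f` for all `σ ∈ G`. -/
def IsInv {F : Type*} [Field F] {N : ℕ} {G : Type*} [Group G]
    (ρ : G →* Matrix.GeneralLinearGroup (Fin N) F) (f : MvPolynomial (Fin N) F) : Prop :=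
  ∀ σ : G, matAct ((ρ σ⁻¹ : Matrix.GeneralLinearGroup (Fin N) F) : Matrix (Fin N) (Fin N) F) f = f

/-- `v` is a fixed point of the representation `ρ`. -/
def IsFixedPt {F : Type*} [Field F] {N : ℕ} {G : Type*} [Group G]
    (ρ : G →* Matrix.GeneralLinearGroup (Fin N) F) (v : Fin N → F) : Prop :=
  ∀ σ : G, Matrix.mulVec ((ρ σ : Matrix.GeneralLinearGroup (Fin N) F) : Matrix (Fin N) (Fin N) F) v = v

/-- `ε(G,v)`: minimal positive degree of a homogeneous invariant not vanishing at `v`. -/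
noncomputable def epsGV {F : Type*} [Field F] {N : ℕ} {G : Type*} [Group G]
    (ρ : G →* Matrix.GeneralLinearGroup (Fin N) F) (v : Fin N → F) : ℕ :=
  sInf {d : ℕ | 0 < d ∧ ∃ f : MvPolynomial (Fin N) F,
    IsInv ρ f ∧ f.IsHomogeneous d ∧ eval v f ≠ 0}

/-- `δ(G,V)`: the degree of reductivity, i.e. the supremum of `ε(G,v)` over nonzero
fixed points `v` (and `0` if `V^G = {0}`). -/
noncomputable def deltaGV {F : Type*} [Field F] {N : ℕ} {G : Type*} [Group G]
    (ρ : G →* Matrix.GeneralLinearGroup (Fin N) F) : ℕ :=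
  sSup {e : ℕ | ∃ v : Fin N → F, v ≠ 0 ∧ IsFixedPt ρ v ∧ e = epsGV ρ v}

/-- `V₀`: the common zero set of the `G`-invariant linear forms. -/
def Vzero {F : Type*} [Field F] {N : ℕ} {G : Type*} [Group G]
    (ρ : G →* Matrix.GeneralLinearGroup (Fin N) F) : Set (Fin N → F) :=
  {v | ∀ f : MvPolynomial (Fin N) F, IsInv ρ f → f.IsHomogeneous 1 → eval v f = 0}


namespace MvPolynomial

variable {σ R : Type*}

theorem eval_aeval [CommSemiring R] {τ : Type*} (x : τ → R) (s : σ → MvPolynomial τ R)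
    (f : MvPolynomial σ R) : eval x (aeval s f) = eval (fun i => eval x (s i)) f :=
  comp_aeval_apply s (aeval x) f

theorem IsHomogeneous.aeval_algebraMap_mul [CommSemiring R] {S : Type*} [CommSemiring S]
    [Algebra R S] {f : MvPolynomial σ R} {n : ℕ} (hf : f.IsHomogeneous n) (x : σ → R) (y : S) :
    MvPolynomial.aeval (fun i => algebraMap R S (x i) * y) f =
      algebraMap R S (eval x f) * y ^ n := by
  conv_lhs => rw [f.as_sum]
  conv_rhs => rw [f.as_sum]
  simp only [map_sum, Finset.sum_mul]
  refine Finset.sum_congr rfl fun d hd => ?_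
  have hdeg : ∑ i ∈ d.support, d i = n := by
    rw [← hf (mem_support_iff.mp hd), Finsupp.weight_apply, Finsupp.sum]
    simp
  simp only [aeval_monomial, eval_monomial, Finsupp.prod, mul_pow, Finset.prod_mul_distrib,
    Finset.prod_pow_eq_pow_sum, hdeg, map_mul, map_prod, map_pow]
  ring

theorem coeff_aeval_C_mul_X [CommRing R] (f : MvPolynomial σ R) (x : σ → R) (n : ℕ) :
    (aeval (fun i => Polynomial.C (x i) * Polynomial.X) f).coeff n =
      eval x (homogeneousComponent n f) := by
  have hcomp (k : ℕ) : aeval (fun i => Polynomial.C (x i) * Polynomial.X)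
      (homogeneousComponent k f) =
        Polynomial.C (eval x (homogeneousComponent k f)) * Polynomial.X ^ k := by
    simpa only [Polynomial.algebraMap_eq] using
      (homogeneousComponent_isHomogeneous k f).aeval_algebraMap_mul x
        (Polynomial.X : Polynomial R)
  conv_lhs => rw [← sum_homogeneousComponent f]
  simp only [map_sum, hcomp, Polynomial.finsetSum_coeff, Polynomial.coeff_C_mul_X_pow]
  rw [Finset.sum_eq_single n (fun k _ hk => if_neg hk.symm), if_pos rfl]
  intro hn
  rw [homogeneousComponent_eq_zero _ _ (by simpa using hn), map_zero, if_pos rfl]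

theorem eval_homogeneousComponent_one_aeval_X_add_C [CommRing R] {f : MvPolynomial σ R} {d : ℕ}
    (hf : f.IsHomogeneous d) (v : σ → R) :
    eval v (homogeneousComponent 1 (aeval (fun i => X i + C (v i)) f)) = d * eval v f := by
  rw [← coeff_aeval_C_mul_X, comp_aeval_apply]
  have hline : (fun i => aeval (fun i => Polynomial.C (v i) * Polynomial.X) (X i + C (v i))) =
      fun i => algebraMap R (Polynomial R) (v i) * (Polynomial.X + 1) := by
    funext i
    simp [Polynomial.algebraMap_eq, mul_add]
  rw [hline, hf.aeval_algebraMap_mul, Polynomial.algebraMap_eq, Polynomial.coeff_C_mul,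
    Polynomial.coeff_X_add_one_pow, Nat.choose_one_right, mul_comm]

end MvPolynomial

open scoped Matrix

section MatrixAction

variable {F : Type*} [Field F] {N : ℕ}

theorem eval_matAct (A : Matrix (Fin N) (Fin N) F) (f : MvPolynomial (Fin N) F) (x : Fin N → F) :
    eval x (matAct A f) = eval (A *ᵥ x) f := by
  have hrow : (fun i => eval x (∑ j, C (A i j) * X j)) = A *ᵥ x := by
    funext i
    simp [Matrix.mulVec, dotProduct]
  rw [matAct, eval_aeval, hrow]

theorem matAct_matAct (A B : Matrix (Fin N) (Fin N) F) (f : MvPolynomial (Fin N) F) :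
    matAct A (matAct B f) = matAct (B * A) f := by
  have h : (matAct A).comp (matAct B) = matAct (B * A) := by
    refine algHom_ext fun i => ?_
    simp [matAct, Matrix.mul_apply, Finset.mul_sum, Finset.sum_mul, mul_assoc]
    exact Finset.sum_comm
  exact AlgHom.congr_fun h f

theorem MvPolynomial.IsHomogeneous.matAct {f : MvPolynomial (Fin N) F} {n : ℕ}
    (hf : f.IsHomogeneous n) (A : Matrix (Fin N) (Fin N) F) :
    (_root_.matAct A f).IsHomogeneous n := by
  have h := hf.aeval (fun i => ∑ j, C (A i j) * X j) fun i =>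
    IsHomogeneous.sum _ _ _ fun j _ => isHomogeneous_C_mul_X (A i j) j
  rwa [one_mul] at h

theorem homogeneousComponent_matAct (A : Matrix (Fin N) (Fin N) F) (f : MvPolynomial (Fin N) F)
    (n : ℕ) : homogeneousComponent n (matAct A f) = matAct A (homogeneousComponent n f) := by
  conv_lhs => rw [← sum_homogeneousComponent f]
  simp only [map_sum, homogeneousComponent_of_mem
    ((homogeneousComponent_isHomogeneous _ f).matAct A), Finset.sum_ite_eq]
  split_ifs with hn
  · rfl
  · rw [homogeneousComponent_eq_zero _ _ (by simpa using hn), map_zero]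

theorem matAct_aeval_X_add_C {A : Matrix (Fin N) (Fin N) F} {v : Fin N → F} (hv : A *ᵥ v = v)
    (f : MvPolynomial (Fin N) F) :
    matAct A (aeval (fun i => X i + C (v i)) f) =
      aeval (fun i => X i + C (v i)) (matAct A f) := by
  have h : (matAct A).comp (aeval fun i => X i + C (v i)) =
      (aeval fun i => X i + C (v i)).comp (matAct A) := by
    refine algHom_ext fun i => ?_
    conv_lhs => rw [← hv]
    simp [matAct, Matrix.mulVec, dotProduct, mul_add, Finset.sum_add_distrib]
  exact AlgHom.congr_fun h f

end MatrixAction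

section Invariants

variable {F : Type*} [Field F] {N : ℕ} {G : Type*} [Group G]
  (ρ : G →* Matrix.GeneralLinearGroup (Fin N) F)

noncomputable abbrev polyAct (σ : G) : MvPolynomial (Fin N) F →ₐ[F] MvPolynomial (Fin N) F :=
  matAct ((ρ σ⁻¹ : Matrix.GeneralLinearGroup (Fin N) F) : Matrix (Fin N) (Fin N) F)

variable {ρ}

theorem polyAct_mul (σ τ : G) (f : MvPolynomial (Fin N) F) :
    polyAct ρ (σ * τ) f = polyAct ρ σ (polyAct ρ τ f) := by
  simp [polyAct, matAct_matAct]

theorem eval_polyAct_of_isFixedPt {v : Fin N → F} (hv : IsFixedPt ρ v) (σ : G)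
    (f : MvPolynomial (Fin N) F) : eval v (polyAct ρ σ f) = eval v f := by
  rw [eval_matAct, hv]

theorem IsInv.homogeneousComponent {f : MvPolynomial (Fin N) F} (hf : IsInv ρ f) (n : ℕ) :
    IsInv ρ (homogeneousComponent n f) := fun σ => by
  rw [← homogeneousComponent_matAct, hf σ]

theorem IsInv.aeval_X_add_C {f : MvPolynomial (Fin N) F} (hf : IsInv ρ f) {v : Fin N → F}
    (hv : IsFixedPt ρ v) : IsInv ρ (aeval (fun i => X i + C (v i)) f) := fun σ => by
  rw [matAct_aeval_X_add_C (hv σ⁻¹), hf σ]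

theorem eval_eq_zero_of_mem_Vzero {v : Fin N → F} (hv : IsFixedPt ρ v) (hv0 : v ∈ Vzero ρ)
    {f : MvPolynomial (Fin N) F} {d : ℕ} (hf : IsInv ρ f) (hfd : f.IsHomogeneous d)
    (hd : (d : F) ≠ 0) : eval v f = 0 := by
  have hL := hv0 _ ((hf.aeval_X_add_C hv).homogeneousComponent 1)
    (homogeneousComponent_isHomogeneous 1 _)
  rw [eval_homogeneousComponent_one_aeval_X_add_C hfd] at hL
  exact (mul_eq_zero.mp hL).resolve_left hd

end Invariants

section NormTransfer

variable {F : Type*} [Field F] {N : ℕ} {G : Type*} [Group G]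
  (ρ : G →* Matrix.GeneralLinearGroup (Fin N) F) (H : Subgroup G)

noncomputable def relNorm [Fintype H] (f : MvPolynomial (Fin N) F) : MvPolynomial (Fin N) F :=
  ∏ τ : H, polyAct ρ τ f

noncomputable def relTransfer [Fintype (G ⧸ H)] (f : MvPolynomial (Fin N) F) :
    MvPolynomial (Fin N) F :=
  ∑ q : G ⧸ H, polyAct ρ q.out f

variable {ρ H}

theorem polyAct_relNorm [Fintype H] {σ : G} (hσ : σ ∈ H) (f : MvPolynomial (Fin N) F) :
    polyAct ρ σ (relNorm ρ H f) = relNorm ρ H f := by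
  simp only [relNorm, map_prod, ← polyAct_mul]
  exact Fintype.prod_equiv (Equiv.mulLeft (⟨σ, hσ⟩ : H)) _ _ fun τ => rfl

theorem MvPolynomial.IsHomogeneous.relNorm [Fintype H] {f : MvPolynomial (Fin N) F} {n : ℕ}
    (hf : f.IsHomogeneous n) : (_root_.relNorm ρ H f).IsHomogeneous (Fintype.card H * n) := by
  have h := IsHomogeneous.prod Finset.univ (fun τ : H => polyAct ρ τ f) (fun _ => n)
    fun _ _ => hf.matAct _
  rwa [Finset.sum_const, Finset.card_univ, smul_eq_mul] at h

theorem eval_relNorm_of_isFixedPt [Fintype H] {v : Fin N → F} (hv : IsFixedPt ρ v)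
    (f : MvPolynomial (Fin N) F) : eval v (relNorm ρ H f) = eval v f ^ Fintype.card H := by
  simp [relNorm, eval_polyAct_of_isFixedPt hv]

theorem isInv_relTransfer [Fintype (G ⧸ H)] {f : MvPolynomial (Fin N) F}
    (hf : ∀ τ ∈ H, polyAct ρ τ f = f) : IsInv ρ (relTransfer ρ H f) := by
  have hcoset (a b : G) (hab : (a : G ⧸ H) = b) : polyAct ρ a f = polyAct ρ b f := by
    rw [← mul_inv_cancel_left a b, polyAct_mul, hf _ (QuotientGroup.eq.mp hab)]
  intro σ
  change polyAct ρ σ _ = _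
  simp only [relTransfer, map_sum, ← polyAct_mul]
  refine Fintype.sum_equiv (MulAction.toPerm σ) _ _ fun q => hcoset _ _ ?_
  rw [QuotientGroup.out_eq']
  exact MulAction.Quotient.mk_smul_out H σ q

theorem MvPolynomial.IsHomogeneous.relTransfer [Fintype (G ⧸ H)] {f : MvPolynomial (Fin N) F}
    {n : ℕ} (hf : f.IsHomogeneous n) : (_root_.relTransfer ρ H f).IsHomogeneous n :=
  IsHomogeneous.sum _ _ _ fun _ _ => hf.matAct _

theorem eval_relTransfer_of_isFixedPt [Fintype (G ⧸ H)] {v : Fin N → F} (hv : IsFixedPt ρ v)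
    (f : MvPolynomial (Fin N) F) :
    eval v (relTransfer ρ H f) = Fintype.card (G ⧸ H) * eval v f := by
  simp [relTransfer, eval_polyAct_of_isFixedPt hv]

end NormTransfer

section DegreeOfReductivity

variable {F : Type*} [Field F] {N : ℕ} {G : Type*} [Group G]
  {ρ : G →* Matrix.GeneralLinearGroup (Fin N) F}

theorem exists_isInv_isHomogeneous_prime_eval_ne_zero [Fintype G] {p m : ℕ} (hp : p.Prime)
    [CharP F p] (hcard : Fintype.card G = p * m) (hcop : Nat.Coprime p m) {v : Fin N → F}
    (hv : v ≠ 0) (hfix : IsFixedPt ρ v) :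
    ∃ f : MvPolynomial (Fin N) F, IsInv ρ f ∧ f.IsHomogeneous p ∧ eval v f ≠ 0 := by
  classical
  obtain ⟨i, hi⟩ := Function.ne_iff.mp hv
  have : Fact p.Prime := ⟨hp⟩
  obtain ⟨g, hg⟩ := exists_prime_orderOf_dvd_card p (hcard ▸ dvd_mul_right p m)
  set P := Subgroup.zpowers g
  have hP : Fintype.card P = p := by rw [Fintype.card_zpowers, hg]
  have hQ : Fintype.card (G ⧸ P) = m := by
    have h := P.index_mul_card
    rw [Nat.card_eq_fintype_card, Nat.card_eq_fintype_card, hP, hcard, mul_comm p] at h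
    rw [← Nat.card_eq_fintype_card, ← Subgroup.index, Nat.eq_of_mul_eq_mul_right hp.pos h]
  refine ⟨relTransfer ρ P (relNorm ρ P (X i)),
    isInv_relTransfer fun _ hτ => polyAct_relNorm hτ _, ?_, ?_⟩
  · simpa [hP] using ((isHomogeneous_X F i).relNorm (ρ := ρ) (H := P)).relTransfer (ρ := ρ)
  · rw [eval_relTransfer_of_isFixedPt hfix, eval_relNorm_of_isFixedPt hfix, eval_X, hQ, hP]
    refine mul_ne_zero ?_ (pow_ne_zero _ hi)
    rwa [Ne, CharP.cast_eq_zero_iff F p, ← hp.coprime_iff_not_dvd]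

theorem epsGV_eq_one_of_notMem_Vzero {v : Fin N → F} (hv : v ∉ Vzero ρ) : epsGV ρ v = 1 := by
  simp only [Vzero, Set.mem_ofPred_eq, not_forall] at hv
  obtain ⟨f, hf, hf1, hfv⟩ := hv
  exact IsLeast.csInf_eq ⟨⟨one_pos, f, hf, hf1, hfv⟩, fun d hd => hd.1⟩

theorem epsGV_eq_of_mem_Vzero [Fintype G] {p m : ℕ} (hp : p.Prime) [CharP F p]
    (hcard : Fintype.card G = p * m) (hcop : Nat.Coprime p m) {v : Fin N → F} (hv : v ≠ 0)
    (hfix : IsFixedPt ρ v) (hv0 : v ∈ Vzero ρ) : epsGV ρ v = p := by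
  refine IsLeast.csInf_eq ⟨⟨hp.pos, exists_isInv_isHomogeneous_prime_eval_ne_zero hp hcard hcop
    hv hfix⟩, ?_⟩
  rintro d ⟨hd, f, hf, hfd, hfv⟩
  refine Nat.le_of_dvd hd ?_
  by_contra hpd
  exact hfv <| eval_eq_zero_of_mem_Vzero hfix hv0 hf hfd <|
    (CharP.cast_eq_zero_iff F p d).not.mpr hpd

theorem epsGV_le_of_isFixedPt [Fintype G] {p m : ℕ} (hp : p.Prime) [CharP F p]
    (hcard : Fintype.card G = p * m) (hcop : Nat.Coprime p m) {v : Fin N → F} (hv : v ≠ 0)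
    (hfix : IsFixedPt ρ v) : epsGV ρ v ≤ p := by
  by_cases hv0 : v ∈ Vzero ρ
  · exact (epsGV_eq_of_mem_Vzero hp hcard hcop hv hfix hv0).le
  · exact (epsGV_eq_one_of_notMem_Vzero hv0).trans_le hp.one_lt.le

end DegreeOfReductivity

theorem stmt15_general {F : Type*} [Field F] {p m : ℕ} (hp : p.Prime) [CharP F p]
    {G : Type*} [Group G] [Fintype G]
    (hcard : Fintype.card G = p * m) (hcop : Nat.Coprime p m)
    {N : ℕ} (ρ : G →* Matrix.GeneralLinearGroup (Fin N) F) :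
    ((¬ ∃ v : Fin N → F, v ≠ 0 ∧ IsFixedPt ρ v) → deltaGV ρ = 0) ∧
    ((∃ v : Fin N → F, v ≠ 0 ∧ IsFixedPt ρ v) →
      (∀ v : Fin N → F, IsFixedPt ρ v → v ∈ Vzero ρ → v = 0) → deltaGV ρ = 1) ∧
    ((∃ v : Fin N → F, v ≠ 0 ∧ IsFixedPt ρ v ∧ v ∈ Vzero ρ) → deltaGV ρ = p) := by
  refine ⟨fun hno => ?_, fun ⟨v, hv, hfix⟩ hV => ?_, fun ⟨v, hv, hfix, hv0⟩ => ?_⟩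
  · have hS : {e : ℕ | ∃ v : Fin N → F, v ≠ 0 ∧ IsFixedPt ρ v ∧ e = epsGV ρ v} = ∅ :=
      Set.eq_empty_of_forall_notMem fun _ ⟨v, hv, hfix, _⟩ => hno ⟨v, hv, hfix⟩
    rw [deltaGV, hS, csSup_empty, Nat.bot_eq_zero]
  · refine IsGreatest.csSup_eq ⟨⟨v, hv, hfix, ?_⟩, ?_⟩
    · exact (epsGV_eq_one_of_notMem_Vzero fun hv0 => hv (hV v hfix hv0)).symm
    · rintro _ ⟨w, hw, hwfix, rfl⟩
      exact (epsGV_eq_one_of_notMem_Vzero fun hw0 => hw (hV w hwfix hw0)).le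
  · refine IsGreatest.csSup_eq ⟨⟨v, hv, hfix, ?_⟩, ?_⟩
    · exact (epsGV_eq_of_mem_Vzero hp hcard hcop hv hfix hv0).symm
    · rintro _ ⟨w, hw, hwfix, rfl⟩
      exact epsGV_le_of_isFixedPt hp hcard hcop hw hwfix

theorem stmt15 {F : Type*} [Field F] [IsAlgClosed F] {p m : ℕ} (hp : p.Prime) [CharP F p]
    {G : Type*} [Group G] [Fintype G]
    (hcard : Fintype.card G = p * m) (hcop : Nat.Coprime p m)
    {N : ℕ} (ρ : G →* Matrix.GeneralLinearGroup (Fin N) F) :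
    ((¬ ∃ v : Fin N → F, v ≠ 0 ∧ IsFixedPt ρ v) → deltaGV ρ = 0) ∧
    ((∃ v : Fin N → F, v ≠ 0 ∧ IsFixedPt ρ v) →
      (∀ v : Fin N → F, IsFixedPt ρ v → v ∈ Vzero ρ → v = 0) → deltaGV ρ = 1) ∧
    ((∃ v : Fin N → F, v ≠ 0 ∧ IsFixedPt ρ v ∧ v ∈ Vzero ρ) → deltaGV ρ = p) :=
  stmt15_general hp hcard hcop ρ
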